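/- arXiv:2405.09249 — 2 statements merged into one kernel-verified Lean document; each statement's English description precedes it below -/
import Mathlib

section
/- Let G be a 6-minimal subcubic graph (G² is not DP-6-colorable but the square of every proper subgraph of G is). Then G contains no 2-thread, i.e., no edge whose both endpoints have degree 2 in G. -/
open scoped Classical

universe u v

/-- `(H, L)` is a DP-cover of `G`: fibers are cliques, cross edges exist only between
fibers of adjacent vertices and form matchings, and all edges stay within the lists. -/
def IsDPCover {V : Type u} (G : SimpleGraph V) (L : V → Finset ℕ)
    (H : SimpleGraph (V × ℕ)) : Prop :=
  (∀ v : V, ∀ c ∈ L v, ∀ c' ∈ L v, c ≠ c' → H.Adj (v, c) (v, c')) ∧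
  (∀ u v : V, ∀ c c' : ℕ, H.Adj (u, c) (v, c') →
      c ∈ L u ∧ c' ∈ L v ∧ (u = v ∨ G.Adj u v)) ∧
  (∀ u v : V, u ≠ v → ∀ c c₁ c₂ : ℕ,
      H.Adj (u, c) (v, c₁) → H.Adj (u, c) (v, c₂) → c₁ = c₂)

/-- `G` is DP-`k`-colorable: every cover with lists of size at least `k` admits an
independent transversal (one vertex from each fiber, pairwise nonadjacent in `H`). -/
def DPColorable {V : Type u} (G : SimpleGraph V) (k : ℕ) : Prop :=
  ∀ (L : V → Finset ℕ) (H : SimpleGraph (V × ℕ)),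
    IsDPCover G L H → (∀ v, k ≤ (L v).card) →
    ∃ f : V → ℕ, (∀ v, f v ∈ L v) ∧
      ∀ u v : V, u ≠ v → ¬ H.Adj (u, f u) (v, f v)

noncomputable def dpChromaticNumber {V : Type u} (G : SimpleGraph V) : ℕ :=
  sInf {k | DPColorable G k}

/-- The square of a graph: join vertices at distance at most 2. -/
def graphSq {V : Type u} (G : SimpleGraph V) : SimpleGraph V where
  Adj u v := u ≠ v ∧ (G.Adj u v ∨ ∃ w, G.Adj u w ∧ G.Adj w v)
  symm := by
    constructor
    rintro u v ⟨h1, h2⟩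
    refine ⟨h1.symm, ?_⟩
    rcases h2 with h | ⟨w, hw1, hw2⟩
    · exact Or.inl h.symm
    · exact Or.inr ⟨w, hw2.symm, hw1.symm⟩
  loopless := ⟨fun v h => h.1 rfl⟩

/-- `G` is `k`-minimal: `G²` is not DP-`k`-colorable but the square of every proper
subgraph of `G` is DP-`k`-colorable. -/
def KMinimal {V : Type u} (G : SimpleGraph V) (k : ℕ) : Prop :=
  ¬ DPColorable (graphSq G) k ∧ ∀ H : SimpleGraph V, H < G → DPColorable (graphSq H) k

/-- `mad(G) < q`: every nonempty (induced) subgraph has average degree less than `q`.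
The filtered product counts each edge twice, i.e. it equals `2|E(H)|`. -/
def MadLT {V : Type u} [Fintype V] (G : SimpleGraph V) (q : ℚ) : Prop :=
  ∀ s : Finset V, s.Nonempty →
    ((((s ×ˢ s).filter fun p : V × V => G.Adj p.1 p.2).card : ℚ)) < q * s.card

/-- `H` is a minor of `G`. -/
def HasMinor {V : Type u} {W : Type v} (G : SimpleGraph V) (H : SimpleGraph W) : Prop :=
  ∃ f : W → Set V, (∀ w, (f w).Nonempty) ∧
    (∀ w, (G.induce (f w)).Connected) ∧
    (∀ w w', w ≠ w' → Disjoint (f w) (f w')) ∧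
    (∀ w w', H.Adj w w' → ∃ x ∈ f w, ∃ y ∈ f w', G.Adj x y)

/-- Planarity via Wagner's theorem: no `K₅` minor and no `K₃,₃` minor. -/
def PlanarGraph {V : Type u} (G : SimpleGraph V) : Prop :=
  ¬ HasMinor G (⊤ : SimpleGraph (Fin 5)) ∧
  ¬ HasMinor G (completeBipartiteGraph (Fin 3) (Fin 3))

/-
Delete the edge `uv`. The square of the smaller graph is DP-6-colourable for the cover restricted
to it, and the resulting transversal can only fail at `u` or `v`, because a path of length at most
two through `uv` ends in `{u, v}`. In `G²` both `u` and `v` have at most `2 + 3` neighbours, so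
they can be recoloured greedily, first `u`, then `v`.
-/

namespace SimpleGraph

variable {V : Type u}

lemma card_neighborFinset_graphSq_le [Fintype V] (G : SimpleGraph V) (u : V) :
    ((graphSq G).neighborFinset u).card ≤ ∑ m ∈ G.neighborFinset u, G.degree m := by
  have hsub : (graphSq G).neighborFinset u ⊆
      (G.neighborFinset u).biUnion fun m => insert m ((G.neighborFinset m).erase u) := by
    intro a ha
    obtain ⟨hua, hadj | ⟨m, hum, hma⟩⟩ := ((graphSq G).mem_neighborFinset u a).1 ha
    · exact Finset.mem_biUnion.2
        ⟨a, (G.mem_neighborFinset u a).2 hadj, Finset.mem_insert_self _ _⟩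
    · refine Finset.mem_biUnion.2 ⟨m, (G.mem_neighborFinset u m).2 hum, ?_⟩
      exact Finset.mem_insert_of_mem
        (Finset.mem_erase.2 ⟨hua.symm, (G.mem_neighborFinset m a).2 hma⟩)
  refine (Finset.card_le_card hsub).trans (Finset.card_biUnion_le.trans (Finset.sum_le_sum ?_))
  intro m hm
  have hu : u ∈ G.neighborFinset m :=
    (G.mem_neighborFinset m u).2 ((G.mem_neighborFinset u m).1 hm).symm
  calc (insert m ((G.neighborFinset m).erase u)).card
      ≤ ((G.neighborFinset m).erase u).card + 1 := Finset.card_insert_le _ _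
    _ = G.degree m := by rw [Finset.card_erase_add_one hu, card_neighborFinset_eq_degree]

lemma card_neighborFinset_graphSq_le_five [Fintype V] {G : SimpleGraph V}
    (hsub : ∀ v, G.degree v ≤ 3) {u v : V} (huv : G.Adj u v)
    (hu : G.degree u = 2) (hv : G.degree v = 2) :
    ((graphSq G).neighborFinset u).card ≤ 5 := by
  have hvN : v ∈ G.neighborFinset u := (G.mem_neighborFinset u v).2 huv
  have hcard : ((G.neighborFinset u).erase v).card = 1 := by
    rw [Finset.card_erase_of_mem hvN, card_neighborFinset_eq_degree, hu]
  calc ((graphSq G).neighborFinset u).card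
      ≤ ∑ m ∈ G.neighborFinset u, G.degree m := card_neighborFinset_graphSq_le G u
    _ = G.degree v + ∑ m ∈ (G.neighborFinset u).erase v, G.degree m :=
        (Finset.add_sum_erase _ _ hvN).symm
    _ ≤ 2 + ((G.neighborFinset u).erase v).card • 3 := by
        rw [hv]; exact Nat.add_le_add_left (Finset.sum_le_card_nsmul _ _ _ fun m _ => hsub m) 2
    _ = 5 := by rw [hcard]; rfl

lemma graphSq_deleteEdges_adj {G : SimpleGraph V} {e : Sym2 V} {a b : V}
    (ha : a ∉ e) (hb : b ∉ e) (h : (graphSq G).Adj a b) :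
    (graphSq (G.deleteEdges {e})).Adj a b := by
  have keep : ∀ {c d : V}, c ∉ e → G.Adj c d → (G.deleteEdges {e}).Adj c d := fun hc hcd =>
    deleteEdges_adj.2 ⟨hcd, fun h => hc (h ▸ Sym2.mem_mk_left _ _)⟩
  obtain ⟨hab, hadj | ⟨m, ham, hmb⟩⟩ := h
  · exact ⟨hab, Or.inl (keep ha hadj)⟩
  · exact ⟨hab, Or.inr ⟨m, keep ha ham, (keep hb hmb.symm).symm⟩⟩

end SimpleGraph

section DPCover

variable {V : Type u} {Γ : SimpleGraph V} {L : V → Finset ℕ} {H : SimpleGraph (V × ℕ)}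

def coverRestrict (H : SimpleGraph (V × ℕ)) (Γ' : SimpleGraph V) : SimpleGraph (V × ℕ) where
  Adj p q := H.Adj p q ∧ (p.1 = q.1 ∨ Γ'.Adj p.1 q.1)
  symm := ⟨fun _ _ ⟨h, h'⟩ => ⟨h.symm, h'.imp Eq.symm fun h => h.symm⟩⟩
  loopless := ⟨fun p h => H.loopless.irrefl p h.1⟩

@[simp] lemma coverRestrict_adj {Γ' : SimpleGraph V} {p q : V × ℕ} :
    (coverRestrict H Γ').Adj p q ↔ H.Adj p q ∧ (p.1 = q.1 ∨ Γ'.Adj p.1 q.1) :=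
  Iff.rfl

lemma IsDPCover.restrict (hH : IsDPCover Γ L H) (Γ' : SimpleGraph V) :
    IsDPCover Γ' L (coverRestrict H Γ') :=
  ⟨fun v c hc c' hc' hcc' => coverRestrict_adj.2 ⟨hH.1 v c hc c' hc' hcc', Or.inl rfl⟩,
    fun u v c c' h => ⟨(hH.2.1 u v c c' h.1).1, (hH.2.1 u v c c' h.1).2.1, h.2⟩,
    fun u v huv c c₁ c₂ h₁ h₂ => hH.2.2 u v huv c c₁ c₂ h₁.1 h₂.1⟩

/-- At most one colour of `v` is blocked by each neighbour, so fewer neighbours than colours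
leave a colour of `v` free. -/
lemma IsDPCover.exists_free_color (hH : IsDPCover Γ L H) (f : V → ℕ) (v : V)
    [Fintype (Γ.neighborSet v)] (hv : (Γ.neighborFinset v).card < (L v).card) :
    ∃ c ∈ L v, ∀ a, a ≠ v → ¬ H.Adj (a, f a) (v, c) := by
  classical
  set blocked := (Γ.neighborFinset v).biUnion fun a => (L v).filter fun c => H.Adj (a, f a) (v, c)
  have hblocked : blocked.card < (L v).card := by
    refine lt_of_le_of_lt (Finset.card_biUnion_le_card_mul _ _ 1 fun a ha => ?_) (by simpa using hv)
    refine Finset.card_le_one.2 fun c₁ h₁ c₂ h₂ => ?_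
    exact hH.2.2 a v ((Γ.mem_neighborFinset v a).1 ha).ne.symm (f a) c₁ c₂
      (Finset.mem_filter.1 h₁).2 (Finset.mem_filter.1 h₂).2
  obtain ⟨c, hc, hcb⟩ := Finset.exists_mem_notMem_of_card_lt_card hblocked
  refine ⟨c, hc, fun a hav hadj =>
    hcb (Finset.mem_biUnion.2 ⟨a, ?_, Finset.mem_filter.2 ⟨hc, hadj⟩⟩)⟩
  exact (Γ.mem_neighborFinset v a).2 (((hH.2.1 _ _ _ _ hadj).2.2.resolve_left hav).symm)

def IsIndepOutside (H : SimpleGraph (V × ℕ)) (f : V → ℕ) (S : Set V) : Prop :=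
  ∀ a b, a ∉ S → b ∉ S → a ≠ b → ¬ H.Adj (a, f a) (b, f b)

lemma isIndepOutside_of_restrict {Γ' : SimpleGraph V} {S : Set V} (hH : IsDPCover Γ L H)
    {f : V → ℕ} (hf : ∀ a b, a ≠ b → ¬ (coverRestrict H Γ').Adj (a, f a) (b, f b))
    (hΓ : ∀ a b, a ∉ S → b ∉ S → Γ.Adj a b → Γ'.Adj a b) : IsIndepOutside H f S :=
  fun a b ha hb hab hadj => hf a b hab <| coverRestrict_adj.2
    ⟨hadj, Or.inr (hΓ a b ha hb ((hH.2.1 _ _ _ _ hadj).2.2.resolve_left hab))⟩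

lemma IsIndepOutside.update_insert {f : V → ℕ} {S : Set V} {v : V} {c : ℕ}
    (hf : IsIndepOutside H f (insert v S)) (hc : ∀ a, a ≠ v → ¬ H.Adj (a, f a) (v, c)) :
    IsIndepOutside H (Function.update f v c) S := by
  intro a b ha hb hab
  by_cases hav : a = v
  · subst hav
    simpa [Function.update_of_ne (Ne.symm hab)] using fun h => hc b (Ne.symm hab) h.symm
  by_cases hbv : b = v
  · subst hbv
    simpa [Function.update_of_ne hab] using hc a hab
  simpa [Function.update_of_ne hav, Function.update_of_ne hbv] using
    hf a b (by simp [ha, hav]) (by simp [hb, hbv]) hab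

end DPCover

/-- a 6-minimal subcubic graph contains no 2-thread. -/
theorem no_two_thread_of_6minimal {V : Type u} [Fintype V] (G : SimpleGraph V)
    (hsub : ∀ v, G.degree v ≤ 3) (hmin : KMinimal G 6) :
    ∀ u v : V, G.Adj u v → ¬ (G.degree u = 2 ∧ G.degree v = 2) := by
  rintro u v huv ⟨hu, hv⟩
  set G' := G.deleteEdges {s(u, v)}
  have hG' : G' < G := (G.deleteEdges_le _).lt_of_ne (by simpa using huv)
  refine hmin.1 fun L H hH hL => ?_
  obtain ⟨f, hfL, hf⟩ := hmin.2 G' hG' L _ (hH.restrict (graphSq G')) hL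
  have hf' : IsIndepOutside H f {u, v} := isIndepOutside_of_restrict hH hf
    fun a b ha hb => SimpleGraph.graphSq_deleteEdges_adj (by simpa using ha) (by simpa using hb)
  have h5 : ∀ {x y}, G.Adj x y → G.degree x = 2 → G.degree y = 2 →
      ((graphSq G).neighborFinset x).card < (L x).card := fun hxy hx hy =>
    (SimpleGraph.card_neighborFinset_graphSq_le_five hsub hxy hx hy).trans_lt (hL _)
  obtain ⟨cu, hcuL, hcu⟩ := hH.exists_free_color f u (h5 huv hu hv)
  obtain ⟨cv, hcvL, hcv⟩ := hH.exists_free_color (Function.update f u cu) v (h5 huv.symm hv hu)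
  have hfu : IsIndepOutside H (Function.update f u cu) (insert v ∅) := by
    simpa using hf'.update_insert hcu
  have hg := hfu.update_insert hcv
  refine ⟨Function.update (Function.update f u cu) v cv, fun a => ?_,
    fun a b => hg a b (Set.notMem_empty a) (Set.notMem_empty b)⟩
  rcases eq_or_ne a v with rfl | hav
  · simpa using hcvL
  rcases eq_or_ne a u with rfl | hau
  · simpa [hav] using hcuL
  · simpa [hav, hau] using hfL a
end

section
/- Let G be a 6-minimal subcubic graph. Then G does not contain a 4-cycle v1v2v3v4 in which v1 and v3 have degree 3 in G and v2 and v4 have degree 2 in G. -/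
open scoped Classical

universe u v

/-!
Delete the edge `v₁v₂`. Every edge of `G²` not at `v₂` survives in the square of the smaller
graph: a path through `v₂` joins `v₁` and `v₃`, and `v₁v₄v₃` replaces it. By minimality that
square is DP-6-colorable; restrict the cover to it, color, and recolor `v₂`. In `G²`, `v₂` sees
only `v₁`, `v₃` and the other neighbors of `v₁` and `v₃`, at most `5` vertices because `v₂` and
`v₄` are common to both neighborhoods, and each of them forbids at most one of its `6` colors.
-/

def SimpleGraph.restrictCover {V : Type u} (H : SimpleGraph (V × ℕ)) (G' : SimpleGraph V) :
    SimpleGraph (V × ℕ) where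
  Adj a b := H.Adj a b ∧ (a.1 = b.1 ∨ G'.Adj a.1 b.1)
  symm := ⟨fun _ _ h => ⟨h.1.symm, h.2.imp Eq.symm G'.adj_symm⟩⟩
  loopless := ⟨fun a h => H.loopless.irrefl a h.1⟩

namespace IsDPCover

variable {V : Type u} {G : SimpleGraph V} {L : V → Finset ℕ} {H : SimpleGraph (V × ℕ)}

theorem restrictCover (hH : IsDPCover G L H) (G' : SimpleGraph V) :
    IsDPCover G' L (H.restrictCover G') := by
  obtain ⟨hfiber, hcross, hmatch⟩ := hH
  refine ⟨fun v c hc c' hc' hne => ⟨hfiber v c hc c' hc' hne, Or.inl rfl⟩, ?_, ?_⟩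
  · rintro u v c c' ⟨hadj, hbase⟩
    exact ⟨(hcross u v c c' hadj).1, (hcross u v c c' hadj).2.1, hbase⟩
  · rintro u v hne c c₁ c₂ ⟨h₁, -⟩ ⟨h₂, -⟩
    exact hmatch u v hne c c₁ c₂ h₁ h₂

theorem adj_of_adj_of_ne (hH : IsDPCover G L H) {u v : V} {c c' : ℕ}
    (hadj : H.Adj (u, c) (v, c')) (hne : u ≠ v) : G.Adj u v :=
  ((hH.2.1 u v c c' hadj).2.2).resolve_left hne

/-- Cross edges between two fibers form a matching, so each `u ∈ T` forbids at most one color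
of `v`. -/
theorem card_blocked_le (hH : IsDPCover G L H) {v : V} (T : Finset V) (hT : v ∉ T)
    (f : V → ℕ) :
    ((L v).filter fun c => ∃ u ∈ T, H.Adj (v, c) (u, f u)).card ≤ T.card := by
  have hsub : ((L v).filter fun c => ∃ u ∈ T, H.Adj (v, c) (u, f u)) ⊆
      T.biUnion fun u => (L v).filter fun c => H.Adj (v, c) (u, f u) := by
    intro c hc
    obtain ⟨hcL, u, huT, hadj⟩ := Finset.mem_filter.1 hc
    exact Finset.mem_biUnion.2 ⟨u, huT, Finset.mem_filter.2 ⟨hcL, hadj⟩⟩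
  refine (Finset.card_le_card hsub).trans ?_
  refine (Finset.card_biUnion_le_card_mul _ _ 1 fun u hu => ?_).trans (mul_one _).le
  refine Finset.card_le_one.2 fun c hc c' hc' => ?_
  exact hH.2.2 u v (ne_of_mem_of_not_mem hu hT) (f u) c c'
    (Finset.mem_filter.1 hc).2.symm (Finset.mem_filter.1 hc').2.symm

theorem exists_extend (hH : IsDPCover G L H) {v : V} {T : Finset V}
    (hT : ∀ u, G.Adj v u → u ∈ T) (hTL : T.card < (L v).card) {f : V → ℕ}
    (hfL : ∀ u, f u ∈ L u)
    (hf : ∀ u w, u ≠ v → w ≠ v → u ≠ w → ¬ H.Adj (u, f u) (w, f w)) :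
    ∃ g : V → ℕ, (∀ u, g u ∈ L u) ∧ ∀ u w, u ≠ w → ¬ H.Adj (u, g u) (w, g w) := by
  have hblocked := hH.card_blocked_le (T.erase v) (Finset.notMem_erase v T) f
  obtain ⟨c, hcL, hc⟩ := Finset.exists_mem_notMem_of_card_lt_card
    (hblocked.trans_lt ((Finset.card_erase_le).trans_lt hTL))
  have hfree : ∀ u, u ≠ v → ¬ H.Adj (v, c) (u, f u) := fun u hu hadj =>
    hc (Finset.mem_filter.2 ⟨hcL, u, Finset.mem_erase.2
      ⟨hu, hT u (hH.adj_of_adj_of_ne hadj hu.symm)⟩, hadj⟩)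
  refine ⟨Function.update f v c, fun u => ?_, fun u w huw => ?_⟩
  · rcases eq_or_ne u v with rfl | hu
    · simpa using hcL
    · simpa [hu] using hfL u
  · rcases eq_or_ne u v with rfl | hu
    · simpa [huw.symm] using hfree w huw.symm
    rcases eq_or_ne w v with rfl | hw
    · simpa [hu] using fun h => hfree u hu h.symm
    simpa [hu, hw] using hf u w hu hw huw

end IsDPCover

theorem DPColorable.of_forall_adj_of_ne {V : Type u} {G G' : SimpleGraph V} {k : ℕ}
    (hG' : DPColorable G' k) {v : V} {T : Finset V} (hT : ∀ u, G.Adj v u → u ∈ T)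
    (hTk : T.card < k) (hadj : ∀ u w, u ≠ v → w ≠ v → G.Adj u w → G'.Adj u w) :
    DPColorable G k := by
  intro L H hH hL
  obtain ⟨f, hfL, hf⟩ := hG' L (H.restrictCover G') (hH.restrictCover G') hL
  refine hH.exists_extend hT (hTk.trans_le (hL v)) hfL fun u w hu hw huw h => ?_
  exact hf u w huw ⟨h, Or.inr (hadj u w hu hw (hH.adj_of_adj_of_ne h huw))⟩

namespace SimpleGraph

variable {V : Type u} {G : SimpleGraph V}

theorem deleteEdges_singleton_lt {a b : V} (h : G.Adj a b) : G.deleteEdges {s(a, b)} < G :=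
  (G.deleteEdges_le _).lt_of_ne fun heq => by
    have hdel : (G.deleteEdges {s(a, b)}).Adj a b := by rw [heq]; exact h
    simp at hdel

theorem eq_or_eq_of_adj_of_degree_eq_two [Fintype V] {v a b x : V} (hdeg : G.degree v = 2)
    (ha : G.Adj v a) (hb : G.Adj v b) (hab : a ≠ b) (hx : G.Adj v x) : x = a ∨ x = b := by
  have hsub : ({a, b} : Finset V) ⊆ G.neighborFinset v := by
    simp [Finset.insert_subset_iff, ha, hb]
  have heq := Finset.eq_of_subset_of_card_le hsub (by
    rw [card_neighborFinset_eq_degree, hdeg, Finset.card_pair hab])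
  have hmem : x ∈ G.neighborFinset v := by simpa using hx
  simpa [← heq] using hmem

/-- A path of length two through `v` joins `a` and `b`; it is rerouted along `a, w, b`. -/
theorem graphSq_adj_of_ne {G' : SimpleGraph V} {v a b w : V}
    (hG' : ∀ x y, x ≠ v → y ≠ v → G.Adj x y → G'.Adj x y)
    (hv : ∀ x, G.Adj v x → x = a ∨ x = b) (haw : G'.Adj a w) (hwb : G'.Adj w b)
    {x y : V} (hx : x ≠ v) (hy : y ≠ v) (hxy : (graphSq G).Adj x y) :
    (graphSq G').Adj x y := by
  obtain ⟨hne, hedge | ⟨z, hxz, hzy⟩⟩ := hxy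
  · exact ⟨hne, Or.inl (hG' x y hx hy hedge)⟩
  refine ⟨hne, Or.inr ?_⟩
  rcases eq_or_ne z v with rfl | hz
  · rcases hv x hxz.symm with rfl | rfl <;> rcases hv y hzy with rfl | rfl
    · exact absurd rfl hne
    · exact ⟨w, haw, hwb⟩
    · exact ⟨w, hwb.symm, haw.symm⟩
    · exact absurd rfl hne
  · exact ⟨z, hG' x z hx hz hxz, hG' z y hz hy hzy⟩

theorem graphSq_adj_mem [Fintype V] {v a b u : V} (hv : ∀ x, G.Adj v x → x = a ∨ x = b)
    (hu : (graphSq G).Adj v u) :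
    u ∈ (G.neighborFinset a ∪ G.neighborFinset b ∪ {a, b}).erase v := by
  obtain ⟨hne, hedge | ⟨z, hvz, hzu⟩⟩ := hu
  · rcases hv u hedge with rfl | rfl <;> simp [hne.symm]
  · rcases hv z hvz with rfl | rfl <;> simp [hne.symm, hzu]

/-- The two common neighbors `v, w` of `a` and `b` are counted twice in `deg a + deg b`. -/
theorem card_neighborFinset_union_pair_erase_add_one_le [Fintype V] {a b v w : V}
    (hvw : v ≠ w) (hav : G.Adj a v) (hbv : G.Adj b v) (haw : G.Adj a w) (hbw : G.Adj b w) :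
    ((G.neighborFinset a ∪ G.neighborFinset b ∪ {a, b}).erase v).card + 1 ≤
      G.degree a + G.degree b := by
  have hcommon : 2 ≤ (G.neighborFinset a ∩ G.neighborFinset b).card := by
    rw [← Finset.card_pair hvw]
    exact Finset.card_le_card (by simp [Finset.insert_subset_iff, hav, hbv, haw, hbw])
  have hunion := Finset.card_union_add_card_inter (G.neighborFinset a) (G.neighborFinset b)
  have hpair := Finset.card_union_le (G.neighborFinset a ∪ G.neighborFinset b) {a, b}
  have hv : v ∈ G.neighborFinset a ∪ G.neighborFinset b ∪ {a, b} := by simp [hav]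
  rw [Finset.card_erase_of_mem hv, ← card_neighborFinset_eq_degree,
    ← card_neighborFinset_eq_degree]
  have := Finset.card_le_two (a := a) (b := b)
  omega

end SimpleGraph

theorem no_bad_four_cycle_of_6minimal_general {V : Type u} [Fintype V] (G : SimpleGraph V)
    (hmin : KMinimal G 6) :
    ¬ ∃ v₁ v₂ v₃ v₄ : V, v₁ ≠ v₃ ∧ v₂ ≠ v₄ ∧
      G.Adj v₁ v₂ ∧ G.Adj v₂ v₃ ∧ G.Adj v₃ v₄ ∧ G.Adj v₄ v₁ ∧
      G.degree v₁ = 3 ∧ G.degree v₃ = 3 ∧ G.degree v₂ = 2 ∧ G.degree v₄ = 2 := by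
  rintro ⟨v₁, v₂, v₃, v₄, h13, h24, a12, a23, a34, a41, d1, d3, d2, -⟩
  have hnbr : ∀ x, G.Adj v₂ x → x = v₁ ∨ x = v₃ :=
    fun x => G.eq_or_eq_of_adj_of_degree_eq_two d2 a12.symm a23 h13
  have hkept : ∀ x y, x ≠ v₂ → y ≠ v₂ → G.Adj x y → (G.deleteEdges {s(v₁, v₂)}).Adj x y :=
    fun x y hx hy hxy => by simp [hxy, hx, hy]
  have hcard :=
    SimpleGraph.card_neighborFinset_union_pair_erase_add_one_le h24 a12 a23.symm a41.symm a34
  refine hmin.1 <| (hmin.2 _ (SimpleGraph.deleteEdges_singleton_lt a12)).of_forall_adj_of_ne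
    (fun _ => SimpleGraph.graphSq_adj_mem hnbr) (by omega) fun x y hx hy =>
      SimpleGraph.graphSq_adj_of_ne hkept hnbr (hkept _ _ a12.ne h24.symm a41.symm)
        (hkept _ _ h24.symm a23.ne.symm a34.symm) hx hy

/-- a 6-minimal subcubic graph contains no 4-cycle whose two
nonadjacent vertices have degree 3 while the other two have degree 2. -/
theorem no_bad_four_cycle_of_6minimal {V : Type u} [Fintype V] (G : SimpleGraph V)
    (hsub : ∀ v, G.degree v ≤ 3) (hmin : KMinimal G 6) :
    ¬ ∃ v₁ v₂ v₃ v₄ : V, v₁ ≠ v₃ ∧ v₂ ≠ v₄ ∧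
      G.Adj v₁ v₂ ∧ G.Adj v₂ v₃ ∧ G.Adj v₃ v₄ ∧ G.Adj v₄ v₁ ∧
      G.degree v₁ = 3 ∧ G.degree v₃ = 3 ∧ G.degree v₂ = 2 ∧ G.degree v₄ = 2 :=
  no_bad_four_cycle_of_6minimal_general G hmin
end
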